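/- Fix μ₁ > κ_a > 0 and α_a > 1 with μ_a = κ_a α_a/(α_a−1) ≤ μ₁, and define h_a(c) = cμ₁/(cμ₁ − κ_a) and g_a(α,c) = log(α_a/α) + α log c + α/α_a − 1. Then the map c ↦ g_a(h_a(c), c) is increasing on [1,∞), and hence its infimum over c ≥ 1 is attained at c = 1 with value log(α_a(μ₁−κ_a)/μ₁) + (1/α_a)·μ₁/(μ₁−κ_a) − 1. -/

import Mathlib

/-!
Along the boundary `α = h_a(c)` the derivative of `c ↦ g_a(h_a(c), c)` is
`μ₁ / (cμ₁ - κ_a)² · (cμ₁ - κ_a log c - κ_a²/(cμ₁) - κ_a/α_a)`. For `c ≥ 1` the bracket is at least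
`μ₁ (c - 1) - κ_a log c + (μ₁ - κ_a - κ_a/α_a)`, where the first part is nonnegative because
`log c ≤ c - 1` and the second is positive because the mean condition `μ_a ≤ μ₁` reads
`μ₁ ≥ κ_a + κ_a/α_a + κ_a/(α_a (α_a - 1))`.
-/

open Real Set

/-- `h_a(c)`: the largest shape `α` for which the Pareto law `Pa(κ/c, α)` has mean at least `μ`. -/
noncomputable def paretoMaxShape (κ μ c : ℝ) : ℝ := c * μ / (c * μ - κ)

/-- `g_a(α, c) = KL(Pa(κ, αa) ‖ Pa(κ/c, α))`. -/
noncomputable def paretoKL (αa α c : ℝ) : ℝ := log (αa / α) + α * log c + α / αa - 1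

section

variable {κ μ αa c : ℝ}

theorem hasDerivAt_paretoMaxShape (hc : c * μ - κ ≠ 0) :
    HasDerivAt (paretoMaxShape κ μ) (-(κ * μ) / (c * μ - κ) ^ 2) c := by
  have h := ((hasDerivAt_id c).mul_const μ).div (((hasDerivAt_id c).mul_const μ).sub_const κ) hc
  refine h.congr_deriv ?_
  simp only [id]
  ring

theorem hasDerivAt_paretoKL_maxShape (hαa : αa ≠ 0) (hc : c ≠ 0) (hμ : μ ≠ 0)
    (hcμ : c * μ - κ ≠ 0) :
    HasDerivAt (fun c ↦ paretoKL αa (paretoMaxShape κ μ c) c)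
      (μ / (c * μ - κ) ^ 2 * (c * μ - κ * log c - κ ^ 2 / (c * μ) - κ / αa)) c := by
  have hshape := hasDerivAt_paretoMaxShape hcμ
  have hshape_ne : paretoMaxShape κ μ c ≠ 0 := div_ne_zero (mul_ne_zero hc hμ) hcμ
  have h := ((((hasDerivAt_const c αa).div hshape hshape_ne).log
    (div_ne_zero hαa hshape_ne)).add (hshape.mul (hasDerivAt_log hc))).add
    (hshape.div_const αa) |>.sub_const 1
  refine h.congr_deriv ?_
  simp only [Pi.div_apply, paretoMaxShape]
  field_simp
  ring

theorem mul_log_le_mul_sub_one (hκ : 0 ≤ κ) (hκμ : κ ≤ μ) (hc : 1 ≤ c) :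
    κ * log c ≤ μ * (c - 1) := by
  have hlog : log c ≤ c - 1 := log_le_sub_one_of_pos (by linarith)
  have hlog₀ : 0 ≤ log c := log_nonneg hc
  nlinarith

theorem add_div_lt_of_mul_div_sub_one_le (hκ : 0 < κ) (hα : 1 < αa)
    (hμ : κ * αa / (αa - 1) ≤ μ) : κ + κ / αa < μ := by
  have hα₁ : αa - 1 ≠ 0 := by linarith
  have hslack : κ * αa / (αa - 1) - (κ + κ / αa) = κ / (αa * (αa - 1)) := by
    field_simp
    ring
  have : 0 < κ / (αa * (αa - 1)) := by
    apply div_pos hκ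
    nlinarith
  linarith

theorem paretoKL_maxShape_deriv_numerator_pos (hκ : 0 ≤ κ) (hμ : κ + κ / αa < μ)
    (hαa : 0 < αa) (hc : 1 ≤ c) :
    0 < c * μ - κ * log c - κ ^ 2 / (c * μ) - κ / αa := by
  have hκμ : κ ≤ μ := by linarith [div_nonneg hκ hαa.le]
  have hcμ : κ ≤ c * μ := by nlinarith
  have hsq : κ ^ 2 / (c * μ) ≤ κ := by
    rcases hκ.eq_or_lt with rfl | hκ₀
    · simp
    · rw [div_le_iff₀ (by linarith), sq]
      exact mul_le_mul_of_nonneg_left hcμ hκ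
  have := mul_log_le_mul_sub_one hκ hκμ hc
  linarith

theorem strictMonoOn_paretoKL_maxShape (hκ : 0 ≤ κ) (hαa : 0 < αa) (hμ : κ + κ / αa < μ) :
    StrictMonoOn (fun c ↦ paretoKL αa (paretoMaxShape κ μ c) c) (Ici 1) := by
  have hκμ : κ < μ := by linarith [div_nonneg hκ hαa.le]
  have hderiv : ∀ c ∈ Ici (1 : ℝ), HasDerivAt (fun c ↦ paretoKL αa (paretoMaxShape κ μ c) c)
      (μ / (c * μ - κ) ^ 2 * (c * μ - κ * log c - κ ^ 2 / (c * μ) - κ / αa)) c := by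
    intro c (hc : 1 ≤ c)
    exact hasDerivAt_paretoKL_maxShape hαa.ne' (by positivity) (by linarith) (by nlinarith)
  refine strictMonoOn_of_hasDerivWithinAt_pos (convex_Ici 1)
    (fun c hc ↦ (hderiv c hc).continuousAt.continuousWithinAt)
    (fun c hc ↦ (hderiv c (interior_subset hc)).hasDerivWithinAt) ?_
  intro c hc_int
  rw [interior_Ici] at hc_int
  have hc : 1 ≤ c := le_of_lt hc_int
  have hcμ : 0 < c * μ - κ := by nlinarith
  exact mul_pos (div_pos (by linarith) (by positivity))
    (paretoKL_maxShape_deriv_numerator_pos hκ hμ hαa hc)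

theorem paretoKL_maxShape_one :
    paretoKL αa (paretoMaxShape κ μ 1) 1 = log (αa * (μ - κ) / μ) + 1 / αa * (μ / (μ - κ)) - 1 := by
  simp only [paretoKL, paretoMaxShape, one_mul, log_one, mul_zero, div_div_eq_mul_div]
  ring

end

theorem g_comp_h_monotone_general (κa αa μ₁ : ℝ) (hκ : 0 < κa)
    (hα : 1 < αa) (hμ : κa * αa / (αa - 1) ≤ μ₁) :
    StrictMonoOn
        (fun c : ℝ =>
          Real.log (αa / (c * μ₁ / (c * μ₁ - κa))) +
            (c * μ₁ / (c * μ₁ - κa)) * Real.log c +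
            (c * μ₁ / (c * μ₁ - κa)) / αa - 1)
        (Set.Ici 1) ∧
      IsLeast
        ((fun c : ℝ =>
          Real.log (αa / (c * μ₁ / (c * μ₁ - κa))) +
            (c * μ₁ / (c * μ₁ - κa)) * Real.log c +
            (c * μ₁ / (c * μ₁ - κa)) / αa - 1) '' Set.Ici 1)
        (Real.log (αa * (μ₁ - κa) / μ₁) + (1 / αa) * (μ₁ / (μ₁ - κa)) - 1) := by
  have hmono : StrictMonoOn (fun c ↦ paretoKL αa (paretoMaxShape κa μ₁ c) c) (Ici 1) :=
    strictMonoOn_paretoKL_maxShape hκ.le (by linarith)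
      (add_div_lt_of_mul_div_sub_one_le hκ hα hμ)
  refine ⟨hmono, ?_⟩
  rw [← paretoKL_maxShape_one]
  exact hmono.monotoneOn.map_isLeast isLeast_Ici

/-- With `h_a(c) = cμ₁/(cμ₁ - κ_a)` and
`g_a(α, c) = log (α_a/α) + α log c + α/α_a - 1`, the map `c ↦ g_a(h_a(c), c)` is
(strictly) increasing on `[1, ∞)`; hence its infimum over `c ≥ 1` is attained at
`c = 1`, with value `log (α_a (μ₁ - κ_a)/μ₁) + (1/α_a)·μ₁/(μ₁ - κ_a) - 1`. -/
theorem g_comp_h_monotone (κa αa μ₁ : ℝ) (hκ : 0 < κa) (hκμ : κa < μ₁)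
    (hα : 1 < αa) (hμ : κa * αa / (αa - 1) ≤ μ₁) :
    StrictMonoOn
        (fun c : ℝ =>
          Real.log (αa / (c * μ₁ / (c * μ₁ - κa))) +
            (c * μ₁ / (c * μ₁ - κa)) * Real.log c +
            (c * μ₁ / (c * μ₁ - κa)) / αa - 1)
        (Set.Ici 1) ∧
      IsLeast
        ((fun c : ℝ =>
          Real.log (αa / (c * μ₁ / (c * μ₁ - κa))) +
            (c * μ₁ / (c * μ₁ - κa)) * Real.log c +
            (c * μ₁ / (c * μ₁ - κa)) / αa - 1) '' Set.Ici 1)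
        (Real.log (αa * (μ₁ - κa) / μ₁) + (1 / αa) * (μ₁ / (μ₁ - κa)) - 1) :=
  g_comp_h_monotone_general κa αa μ₁ hκ hα hμ
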